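/- Let (Φ, X⁰_α, X⁰_β, ξ) be a surface datum in S³ over a simply connected domain V ⊆ ℝ², with Φ_x = −a₁ X⁰_α and Φ_y = −a₂ X⁰_β for smooth nowhere-vanishing functions a₁, a₂, with ⟨ξ_x, X⁰_β⟩ = ⟨ξ_y, X⁰_α⟩ = 0 on V, and write ξ_x = b₁ X⁰_α and ξ_y = b₂ X⁰_β. Suppose smooth functions φ̄, P̄ on V with sin φ̄ · cos φ̄ ≠ 0 everywhere satisfy a₁ sin φ̄ − a₂ cos φ̄ = 1, (a₁)_x = −φ̄_x a₂ + P̄_x a₁ and (a₂)_y = φ̄_y a₁ + P̄_y a₂. Set e^{−P̄} := exp(−P̄), Q := a₁ cos φ̄ + a₂ sin φ̄, κ̄₁ := a₁/(e^{P̄} cos φ̄), κ̄₂ := a₂/(e^{P̄} sin φ̄), κ̄₃ := e^{−P̄} Q, σ̄₃ := (e^{−2P̄} + κ̄₃²)/2, and H := (b₁/a₁ + b₂/a₂)/2 (the mean curvature of Φ). Then the following identity of ℝ⁴-valued maps holds on V: −(1/a₁²) Φ_{xx} − (1/a₂²) Φ_{yy} = 2(Φ − H ξ) + ((a₁² + a₂²)/(a₁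 a₂)) · [ −(1/a₁)(φ̄_x − ((e^{−P̄})_x κ̄₁)/(2σ̄₃)) X⁰_α + (1/a₂)(φ̄_y − ((e^{−P̄})_y κ̄₂)/(2σ̄₃)) X⁰_β ]. (Corollary 5.3; the coefficients φ̄_x − ((e^{−P̄})_x κ̄₁)/(2σ̄₃) and φ̄_y − ((e^{−P̄})_y κ̄₂)/(2σ̄₃) equal (φ̄ + φ̄*)_x/2 and (φ̄ + φ̄*)_y/2 for the dual angle function φ̄*.) -/

import Mathlib

noncomputable section

open Real
open scoped RealInnerProductSpace

/-- Partial derivative in the `x`-direction of a map on `ℝ² = ℝ × ℝ`. -/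
def qx {E : Type*} [NormedAddCommGroup E] [NormedSpace ℝ E]
    (f : ℝ × ℝ → E) : ℝ × ℝ → E := fun q => fderiv ℝ f q (1, 0)

/-- Partial derivative in the `y`-direction of a map on `ℝ² = ℝ × ℝ`. -/
def qy {E : Type*} [NormedAddCommGroup E] [NormedSpace ℝ E]
    (f : ℝ × ℝ → E) : ℝ × ℝ → E := fun q => fderiv ℝ f q (0, 1)

/-- Euclidean 4-space. -/
abbrev E4 := EuclideanSpace ℝ (Fin 4)

/-- A surface datum in `S³` over `V`: at each point of `V` the quadruple
`{X⁰_α, X⁰_β, ξ, Φ}` is orthonormal in `ℝ⁴`. -/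
def IsSurfaceDatum (V : Set (ℝ × ℝ)) (Φ Xa Xb ξ : ℝ × ℝ → E4) : Prop :=
  ∀ q ∈ V,
    ⟪Xa q, Xa q⟫ = 1 ∧ ⟪Xb q, Xb q⟫ = 1 ∧ ⟪ξ q, ξ q⟫ = 1 ∧ ⟪Φ q, Φ q⟫ = 1 ∧
    ⟪Xa q, Xb q⟫ = 0 ∧ ⟪Xa q, ξ q⟫ = 0 ∧ ⟪Xa q, Φ q⟫ = 0 ∧
    ⟪Xb q, ξ q⟫ = 0 ∧ ⟪Xb q, Φ q⟫ = 0 ∧ ⟪ξ q, Φ q⟫ = 0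

/-- `e^{−P̄}` on `V`. -/
def Ebar (Pb : ℝ × ℝ → ℝ) : ℝ × ℝ → ℝ := fun q => exp (-(Pb q))

lemma decomp4 (e₀ e₁ e₂ e₃ : E4)
    (h00 : ⟪e₀,e₀⟫=1) (h11 : ⟪e₁,e₁⟫=1) (h22 : ⟪e₂,e₂⟫=1) (h33 : ⟪e₃,e₃⟫=1)
    (h01 : ⟪e₀,e₁⟫=0) (h02 : ⟪e₀,e₂⟫=0) (h03 : ⟪e₀,e₃⟫=0)
    (h12 : ⟪e₁,e₂⟫=0) (h13 : ⟪e₁,e₃⟫=0) (h23 : ⟪e₂,e₃⟫=0) (v : E4) :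
    v = ⟪e₀,v⟫ • e₀ + ⟪e₁,v⟫ • e₁ + ⟪e₂,v⟫ • e₂ + ⟪e₃,v⟫ • e₃ := by
  set f : Fin 4 → E4 := ![e₀,e₁,e₂,e₃] with hf
  have hon : Orthonormal ℝ f := by
    rw [orthonormal_iff_ite]
    intro i j
    fin_cases i <;> fin_cases j <;>
      simp_all [f, real_inner_comm e₀ e₁, real_inner_comm e₀ e₂, real_inner_comm e₀ e₃,
        real_inner_comm e₁ e₂, real_inner_comm e₁ e₃, real_inner_comm e₂ e₃]
  have hcard : Fintype.card (Fin 4) = Module.finrank ℝ E4 := by simp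
  have hli := hon.linearIndependent
  let b := basisOfLinearIndependentOfCardEqFinrank hli hcard
  have hb : ⇑b = f := coe_basisOfLinearIndependentOfCardEqFinrank hli hcard
  have hsp : ⊤ ≤ Submodule.span ℝ (Set.range f) := by
    rw [← hb]; exact b.span_eq.ge
  let ob : OrthonormalBasis (Fin 4) ℝ E4 := OrthonormalBasis.mk hon hsp
  have hob : ⇑ob = f := OrthonormalBasis.coe_mk hon hsp
  have h := ob.sum_repr' v
  rw [hob, Fin.sum_univ_four] at h
  simp only [hf, Matrix.cons_val_zero, Matrix.cons_val_one, Matrix.head_cons,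
    Matrix.cons_val_two, Matrix.tail_cons, Matrix.cons_val_three] at h
  exact h.symm

lemma innerd {V : Set (ℝ × ℝ)} (hV : IsOpen V) {q : ℝ × ℝ} (hq : q ∈ V)
    {f g : ℝ × ℝ → E4} (hf : DifferentiableAt ℝ f q) (hg : DifferentiableAt ℝ g q)
    {c : ℝ} (h : ∀ p ∈ V, ⟪f p, g p⟫ = c) (w : ℝ × ℝ) :
    ⟪f q, fderiv ℝ g q w⟫ + ⟪fderiv ℝ f q w, g q⟫ = 0 := by
  have h1 : (fun p => ⟪f p, g p⟫) =ᶠ[nhds q] fun _ => c :=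
    Filter.eventuallyEq_of_mem (hV.mem_nhds hq) h
  have h2 := fderiv_inner_apply (𝕜 := ℝ) hf hg w
  rw [h1.fderiv_eq] at h2
  simpa using h2.symm

lemma fderiv_smul_frame {V : Set (ℝ × ℝ)} (hV : IsOpen V) {q : ℝ × ℝ} (hq : q ∈ V)
    {F G : ℝ × ℝ → E4} {c : ℝ × ℝ → ℝ}
    (h : ∀ p ∈ V, F p = c p • G p)
    (hc : DifferentiableAt ℝ c q) (hG : DifferentiableAt ℝ G q) (w : ℝ × ℝ) :
    fderiv ℝ F q w = c q • fderiv ℝ G q w + (fderiv ℝ c q w) • G q := by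
  have hE : F =ᶠ[nhds q] fun p => c p • G p := Filter.eventuallyEq_of_mem (hV.mem_nhds hq) h
  rw [hE.fderiv_eq, fderiv_fun_smul hc hG]
  simp

lemma qxy_symm {f : ℝ × ℝ → E4} {q : ℝ × ℝ} (hf : ContDiffAt ℝ 2 f q) :
    fderiv ℝ (fun p => fderiv ℝ f p (1,0)) q (0,1) =
      fderiv ℝ (fun p => fderiv ℝ f p (0,1)) q (1,0) := by
  have hd : DifferentiableAt ℝ (fderiv ℝ f) q :=
    (hf.fderiv_right (m := 1) (by norm_num)).differentiableAt (by norm_num)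
  have h1 : ∀ v w : ℝ × ℝ, fderiv ℝ (fun p => fderiv ℝ f p v) q w =
      fderiv ℝ (fderiv ℝ f) q w v := by
    intro v w
    rw [fderiv_clm_apply hd (differentiableAt_const v)]
    simp
  have hsymm := hf.isSymmSndFDerivAt (by simp [minSmoothness_of_isRCLikeNormedField])
  rw [h1, h1, hsymm.eq]

set_option maxHeartbeats 2000000 in
/-- Corollary 5.3. -/
theorem stmt_19 (V : Set (ℝ × ℝ)) (hVopen : IsOpen V) (hVconn : IsConnected V)
    (hVsc : SimplyConnectedSpace V)
    (Φ Xa Xb ξ : ℝ × ℝ → E4)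
    (hdatum : IsSurfaceDatum V Φ Xa Xb ξ)
    (hΦ : ContDiffOn ℝ (⊤ : ℕ∞) Φ V) (hXa : ContDiffOn ℝ (⊤ : ℕ∞) Xa V)
    (hXb : ContDiffOn ℝ (⊤ : ℕ∞) Xb V) (hξ : ContDiffOn ℝ (⊤ : ℕ∞) ξ V)
    (a₁ a₂ : ℝ × ℝ → ℝ) (ha₁ : ContDiffOn ℝ (⊤ : ℕ∞) a₁ V) (ha₂ : ContDiffOn ℝ (⊤ : ℕ∞) a₂ V)
    (ha₁ne : ∀ q ∈ V, a₁ q ≠ 0) (ha₂ne : ∀ q ∈ V, a₂ q ≠ 0)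
    (hΦx : ∀ q ∈ V, qx Φ q = (-a₁ q) • Xa q)
    (hΦy : ∀ q ∈ V, qy Φ q = (-a₂ q) • Xb q)
    (hpc₁ : ∀ q ∈ V, ⟪qx ξ q, Xb q⟫ = 0)
    (hpc₂ : ∀ q ∈ V, ⟪qy ξ q, Xa q⟫ = 0)
    (b₁ b₂ : ℝ × ℝ → ℝ) (hb₁ : ContDiffOn ℝ (⊤ : ℕ∞) b₁ V) (hb₂ : ContDiffOn ℝ (⊤ : ℕ∞) b₂ V)
    (hξx : ∀ q ∈ V, qx ξ q = b₁ q • Xa q)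
    (hξy : ∀ q ∈ V, qy ξ q = b₂ q • Xb q)
    (φb Pb : ℝ × ℝ → ℝ) (hφb : ContDiffOn ℝ (⊤ : ℕ∞) φb V) (hPb : ContDiffOn ℝ (⊤ : ℕ∞) Pb V)
    (hregb : ∀ q ∈ V, sin (φb q) * cos (φb q) ≠ 0)
    (hone : ∀ q ∈ V, a₁ q * sin (φb q) - a₂ q * cos (φb q) = 1)
    (ha₁x : ∀ q ∈ V, qx a₁ q = -(qx φb q * a₂ q) + qx Pb q * a₁ q)
    (ha₂y : ∀ q ∈ V, qy a₂ q = qy φb q * a₁ q + qy Pb q * a₂ q)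
    (Q k1b k2b k3b s3 H : ℝ × ℝ → ℝ)
    (hQ : Q = fun q => a₁ q * cos (φb q) + a₂ q * sin (φb q))
    (hk1b : k1b = fun q => a₁ q / (exp (Pb q) * cos (φb q)))
    (hk2b : k2b = fun q => a₂ q / (exp (Pb q) * sin (φb q)))
    (hk3b : k3b = fun q => Ebar Pb q * Q q)
    (hs3 : s3 = fun q => (Ebar Pb q ^ 2 + k3b q ^ 2) / 2)
    (hH : H = fun q => (b₁ q / a₁ q + b₂ q / a₂ q) / 2) :
    ∀ q ∈ V,
      (-(1 / a₁ q ^ 2)) • qx (qx Φ) q + (-(1 / a₂ q ^ 2)) • qy (qy Φ) q =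
        (2 : ℝ) • (Φ q - H q • ξ q)
        + ((a₁ q ^ 2 + a₂ q ^ 2) / (a₁ q * a₂ q)) •
            ((-(1 / a₁ q) * (qx φb q - qx (Ebar Pb) q * k1b q / (2 * s3 q))) • Xa q
              + ((1 / a₂ q) * (qy φb q - qy (Ebar Pb) q * k2b q / (2 * s3 q))) • Xb q) := by
  simp only [qx, qy] at hΦx hΦy hξx hξy ha₁x ha₂y ⊢
  intro q hq
  have hmem := hVopen.mem_nhds hq
  -- differentiability
  have da1 : DifferentiableAt ℝ a₁ q := (ha₁.contDiffAt hmem).differentiableAt (by simp)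
  have da2 : DifferentiableAt ℝ a₂ q := (ha₂.contDiffAt hmem).differentiableAt (by simp)
  have dphi : DifferentiableAt ℝ φb q := (hφb.contDiffAt hmem).differentiableAt (by simp)
  have dPp : DifferentiableAt ℝ Pb q := (hPb.contDiffAt hmem).differentiableAt (by simp)
  have dXa : DifferentiableAt ℝ Xa q := (hXa.contDiffAt hmem).differentiableAt (by simp)
  have dXb : DifferentiableAt ℝ Xb q := (hXb.contDiffAt hmem).differentiableAt (by simp)
  have dxi : DifferentiableAt ℝ ξ q := (hξ.contDiffAt hmem).differentiableAt (by simp)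
  have dPhi : DifferentiableAt ℝ Φ q := (hΦ.contDiffAt hmem).differentiableAt (by simp)
  have dPhi2 : ContDiffAt ℝ 2 Φ q := (hΦ.contDiffAt hmem).of_le (WithTop.coe_le_coe.mpr le_top)
  -- datum at q
  obtain ⟨haa, hbb, hxx, hpp, hab, hax, hap, hbx, hbp, hxp⟩ := hdatum q hq
  -- datum as families
  have o_aa : ∀ p ∈ V, ⟪Xa p, Xa p⟫ = (1:ℝ) := fun p hp => (hdatum p hp).1
  have o_bb : ∀ p ∈ V, ⟪Xb p, Xb p⟫ = (1:ℝ) := fun p hp => (hdatum p hp).2.1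
  have o_ab : ∀ p ∈ V, ⟪Xa p, Xb p⟫ = (0:ℝ) := fun p hp => (hdatum p hp).2.2.2.2.1
  have o_ax : ∀ p ∈ V, ⟪Xa p, ξ p⟫ = (0:ℝ) := fun p hp => (hdatum p hp).2.2.2.2.2.1
  have o_ap : ∀ p ∈ V, ⟪Xa p, Φ p⟫ = (0:ℝ) := fun p hp => (hdatum p hp).2.2.2.2.2.2.1
  have o_bx : ∀ p ∈ V, ⟪Xb p, ξ p⟫ = (0:ℝ) := fun p hp => (hdatum p hp).2.2.2.2.2.2.2.1
  have o_bp : ∀ p ∈ V, ⟪Xb p, Φ p⟫ = (0:ℝ) := fun p hp => (hdatum p hp).2.2.2.2.2.2.2.2.1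
  -- self inner derivative vanishing
  have haa' : ∀ w, ⟪Xa q, fderiv ℝ Xa q w⟫ = 0 := by
    intro w
    have h := innerd hVopen hq dXa dXa o_aa w
    linarith [real_inner_comm (fderiv ℝ Xa q w) (Xa q)]
  have hbb' : ∀ w, ⟪Xb q, fderiv ℝ Xb q w⟫ = 0 := by
    intro w
    have h := innerd hVopen hq dXb dXb o_bb w
    linarith [real_inner_comm (fderiv ℝ Xb q w) (Xb q)]
  -- ⟪ξ, D Xa x⟫ = -b₁
  have hxiXa : ⟪ξ q, fderiv ℝ Xa q (1,0)⟫ = -(b₁ q) := by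
    have h := innerd hVopen hq dXa dxi o_ax (1,0)
    rw [hξx q hq, real_inner_smul_right, haa] at h
    linarith [real_inner_comm (fderiv ℝ Xa q (1,0)) (ξ q)]
  have hxiXb : ⟪ξ q, fderiv ℝ Xb q (0,1)⟫ = -(b₂ q) := by
    have h := innerd hVopen hq dXb dxi o_bx (0,1)
    rw [hξy q hq, real_inner_smul_right, hbb] at h
    linarith [real_inner_comm (fderiv ℝ Xb q (0,1)) (ξ q)]
  -- ⟪Φ, D Xa x⟫ = a₁
  have hpXa : ⟪Φ q, fderiv ℝ Xa q (1,0)⟫ = a₁ q := by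
    have h := innerd hVopen hq dXa dPhi o_ap (1,0)
    rw [hΦx q hq, real_inner_smul_right, haa] at h
    linarith [real_inner_comm (fderiv ℝ Xa q (1,0)) (Φ q)]
  have hpXb : ⟪Φ q, fderiv ℝ Xb q (0,1)⟫ = a₂ q := by
    have h := innerd hVopen hq dXb dPhi o_bp (0,1)
    rw [hΦy q hq, real_inner_smul_right, hbb] at h
    linarith [real_inner_comm (fderiv ℝ Xb q (0,1)) (Φ q)]
  -- decompositions
  have hXax := decomp4 (Xa q) (Xb q) (ξ q) (Φ q) haa hbb hxx hpp hab hax hap hbx hbp hxp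
      (fderiv ℝ Xa q (1,0))
  rw [haa' (1,0), hxiXa, hpXa, zero_smul, zero_add] at hXax
  have hXby := decomp4 (Xa q) (Xb q) (ξ q) (Φ q) haa hbb hxx hpp hab hax hap hbx hbp hxp
      (fderiv ℝ Xb q (0,1))
  rw [hbb' (0,1), hxiXb, hpXb, zero_smul, add_zero] at hXby
  -- nonvanishing
  have hA := ha₁ne q hq
  have hB := ha₂ne q hq
  have hsne : sin (φb q) ≠ 0 := fun h => hregb q hq (by rw [h]; ring)
  have hcne : cos (φb q) ≠ 0 := fun h => hregb q hq (by rw [h]; ring)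
  have hene : exp (Pb q) ≠ 0 := (Real.exp_pos _).ne'
  -- second derivatives of Φ
  have hqxx : fderiv ℝ (fun p => fderiv ℝ Φ p (1,0)) q (1,0) =
      (-a₁ q) • fderiv ℝ Xa q (1,0) + (-(fderiv ℝ a₁ q (1,0))) • Xa q := by
    have h := fderiv_smul_frame hVopen hq hΦx da1.neg dXa (1,0)
    rw [fderiv_fun_neg] at h
    simpa using h
  have hqyy : fderiv ℝ (fun p => fderiv ℝ Φ p (0,1)) q (0,1) =
      (-a₂ q) • fderiv ℝ Xb q (0,1) + (-(fderiv ℝ a₂ q (0,1))) • Xb q := by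
    have h := fderiv_smul_frame hVopen hq hΦy da2.neg dXb (0,1)
    rw [fderiv_fun_neg] at h
    simpa using h
  have hmixL : fderiv ℝ (fun p => fderiv ℝ Φ p (1,0)) q (0,1) =
      (-a₁ q) • fderiv ℝ Xa q (0,1) + (-(fderiv ℝ a₁ q (0,1))) • Xa q := by
    have h := fderiv_smul_frame hVopen hq hΦx da1.neg dXa (0,1)
    rw [fderiv_fun_neg] at h
    simpa using h
  have hmixR : fderiv ℝ (fun p => fderiv ℝ Φ p (0,1)) q (1,0) =
      (-a₂ q) • fderiv ℝ Xb q (1,0) + (-(fderiv ℝ a₂ q (1,0))) • Xb q := by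
    have h := fderiv_smul_frame hVopen hq hΦy da2.neg dXb (1,0)
    rw [fderiv_fun_neg] at h
    simpa using h
  have hmixeq : (-a₁ q) • fderiv ℝ Xa q (0,1) + (-(fderiv ℝ a₁ q (0,1))) • Xa q =
      (-a₂ q) • fderiv ℝ Xb q (1,0) + (-(fderiv ℝ a₂ q (1,0))) • Xb q :=
    hmixL.symm.trans ((qxy_symm dPhi2).trans hmixR)
  -- antisymmetry relations
  have habx := innerd hVopen hq dXa dXb o_ab (1,0)
  have haby := innerd hVopen hq dXa dXb o_ab (0,1)
  -- extract u = ⟪Xb, D Xa x⟫ and v' = ⟪Xa, D Xb y⟫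
  have hu' : ⟪Xb q, fderiv ℝ Xa q (1,0)⟫ = -(fderiv ℝ a₁ q (0,1)) / a₂ q := by
    have h1 : ⟪Xa q, (-a₁ q) • fderiv ℝ Xa q (0,1) + (-(fderiv ℝ a₁ q (0,1))) • Xa q⟫ =
        ⟪Xa q, (-a₂ q) • fderiv ℝ Xb q (1,0) + (-(fderiv ℝ a₂ q (1,0))) • Xb q⟫ := by
      rw [hmixeq]
    rw [inner_add_right, inner_add_right, real_inner_smul_right, real_inner_smul_right,
      real_inner_smul_right, real_inner_smul_right, haa' (0,1), haa, hab] at h1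
    rw [eq_div_iff hB]
    have hc := real_inner_comm (fderiv ℝ Xa q (1,0)) (Xb q)
    linear_combination a₂ q * hc + a₂ q * habx - h1
  have hv' : ⟪Xa q, fderiv ℝ Xb q (0,1)⟫ = -(fderiv ℝ a₂ q (1,0)) / a₁ q := by
    have h1 : ⟪Xb q, (-a₁ q) • fderiv ℝ Xa q (0,1) + (-(fderiv ℝ a₁ q (0,1))) • Xa q⟫ =
        ⟪Xb q, (-a₂ q) • fderiv ℝ Xb q (1,0) + (-(fderiv ℝ a₂ q (1,0))) • Xb q⟫ := by
      rw [hmixeq]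
    rw [inner_add_right, inner_add_right, real_inner_smul_right, real_inner_smul_right,
      real_inner_smul_right, real_inner_smul_right, hbb' (1,0), hbb] at h1
    rw [eq_div_iff hA]
    have hc := real_inner_comm (fderiv ℝ Xa q (0,1)) (Xb q)
    linear_combination a₁ q * haby + a₁ q * hc + h1 +
      (fderiv ℝ a₁ q (0,1)) * (real_inner_comm (Xa q) (Xb q)) + (fderiv ℝ a₁ q (0,1)) * hab
  -- derivative of Ebar
  have hE1 : HasFDerivAt (fun p => Real.exp (-(Pb p))) (Real.exp (-(Pb q)) • (-fderiv ℝ Pb q)) q :=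
    dPp.hasFDerivAt.neg.exp
  have hE2 : fderiv ℝ (Ebar Pb) q = Real.exp (-(Pb q)) • (-fderiv ℝ Pb q) := hE1.fderiv
  have hEx : fderiv ℝ (Ebar Pb) q (1,0) = (exp (Pb q))⁻¹ * (-(fderiv ℝ Pb q (1,0))) := by
    rw [hE2, Real.exp_neg]; simp
  have hEy : fderiv ℝ (Ebar Pb) q (0,1) = (exp (Pb q))⁻¹ * (-(fderiv ℝ Pb q (0,1))) := by
    rw [hE2, Real.exp_neg]; simp
  -- derivative of the constraint
  have hg1 : HasFDerivAt (fun p => a₁ p * Real.sin (φb p) - a₂ p * Real.cos (φb p))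
      ((a₁ q • (Real.cos (φb q) • fderiv ℝ φb q) + Real.sin (φb q) • fderiv ℝ a₁ q) -
       (a₂ q • (-Real.sin (φb q) • fderiv ℝ φb q) + Real.cos (φb q) • fderiv ℝ a₂ q)) q :=
    (da1.hasFDerivAt.mul dphi.hasFDerivAt.sin).sub (da2.hasFDerivAt.mul dphi.hasFDerivAt.cos)
  have hg0 : fderiv ℝ (fun p => a₁ p * Real.sin (φb p) - a₂ p * Real.cos (φb p)) q = 0 := by
    have he : (fun p => a₁ p * Real.sin (φb p) - a₂ p * Real.cos (φb p)) =ᶠ[nhds q]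
        fun _ => (1:ℝ) := Filter.eventuallyEq_of_mem hmem hone
    rw [he.fderiv_eq]
    simp
  have hgD := hg1.fderiv
  rw [hg0] at hgD
  have hgx : a₁ q * (Real.cos (φb q) * fderiv ℝ φb q (1,0)) +
      Real.sin (φb q) * fderiv ℝ a₁ q (1,0) -
      (a₂ q * (-Real.sin (φb q) * fderiv ℝ φb q (1,0)) +
        Real.cos (φb q) * fderiv ℝ a₂ q (1,0)) = 0 := by
    have h2 := congrArg (fun (L : ℝ × ℝ →L[ℝ] ℝ) => L (1,0)) hgD
    simpa using h2.symm
  have hgy : a₁ q * (Real.cos (φb q) * fderiv ℝ φb q (0,1)) +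
      Real.sin (φb q) * fderiv ℝ a₁ q (0,1) -
      (a₂ q * (-Real.sin (φb q) * fderiv ℝ φb q (0,1)) +
        Real.cos (φb q) * fderiv ℝ a₂ q (0,1)) = 0 := by
    have h2 := congrArg (fun (L : ℝ × ℝ →L[ℝ] ℝ) => L (0,1)) hgD
    simpa using h2.symm
  -- explicit values for the cross derivatives
  have hBx' : fderiv ℝ a₂ q (1,0) =
      a₁ q * (Real.cos (φb q) * fderiv ℝ φb q (1,0) +
        Real.sin (φb q) * fderiv ℝ Pb q (1,0)) / Real.cos (φb q) := by
    rw [eq_div_iff hcne]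
    linear_combination -hgx + Real.sin (φb q) * (ha₁x q hq)
  have hAy' : fderiv ℝ a₁ q (0,1) =
      a₂ q * (Real.cos (φb q) * fderiv ℝ Pb q (0,1) -
        Real.sin (φb q) * fderiv ℝ φb q (0,1)) / Real.sin (φb q) := by
    rw [eq_div_iff hsne]
    linear_combination hgy + Real.cos (φb q) * (ha₂y q hq)
  -- value of s3
  have hs3v : s3 q = (exp (Pb q))⁻¹ ^ 2 * (a₁ q ^ 2 + a₂ q ^ 2) / 2 := by
    simp only [hs3, hk3b, hQ, Ebar, Real.exp_neg]
    linear_combination (-(exp (Pb q))⁻¹ ^ 2 *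
        (a₁ q * Real.sin (φb q) - a₂ q * Real.cos (φb q) + 1) / 2) * (hone q hq) +
      ((exp (Pb q))⁻¹ ^ 2 * (a₁ q ^ 2 + a₂ q ^ 2) / 2) * (Real.sin_sq_add_cos_sq (φb q))
  have hs3ne : s3 q ≠ 0 := by
    rw [hs3v]
    have h1 : 0 < a₁ q ^ 2 := lt_of_le_of_ne (sq_nonneg _) (Ne.symm (pow_ne_zero 2 hA))
    have h2 : (0:ℝ) ≤ a₂ q ^ 2 := sq_nonneg _
    have h3 : 0 < (exp (Pb q))⁻¹ ^ 2 := by positivity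
    have h4 : 0 < (exp (Pb q))⁻¹ ^ 2 * (a₁ q ^ 2 + a₂ q ^ 2) / 2 :=
      div_pos (mul_pos h3 (by linarith)) two_pos
    exact h4.ne'
  have hux : qx Φ = fun p => fderiv ℝ Φ p (1,0) := rfl
  have huy : qy Φ = fun p => fderiv ℝ Φ p (0,1) := rfl
  rw [hux, huy, hqxx, hqyy, hXax, hXby, hu', hv', hEx, hEy, ha₁x q hq, hBx', hAy', ha₂y q hq, hs3v]
  simp only [hH, hk1b, hk2b]
  have hABne : a₁ q ^ 2 + a₂ q ^ 2 ≠ 0 := by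
    have h1 : 0 < a₁ q ^ 2 := lt_of_le_of_ne (sq_nonneg _) (Ne.symm (pow_ne_zero 2 hA))
    have h2 : (0:ℝ) ≤ a₂ q ^ 2 := sq_nonneg _
    positivity
  clear hqxx hqyy hXax hXby hmixL hmixR hmixeq hdatum hΦ hXa hXb hξ hb₁ hb₂ hΦx hΦy
  clear hξx hξy hpc₁ hpc₂ hφb hPb hregb hVconn hVsc ha₁ ha₂ hg1 hg0 hgD hE1 hE2
  clear haa hbb hxx hpp hab hax hap hbx hbp hxp o_aa o_bb o_ab o_ax o_ap o_bx o_bp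
  clear haa' hbb' hxiXa hxiXb hpXa hpXb habx haby hu' hv' dXa dXb dxi dPhi dPhi2
  clear da1 da2 dphi dPp hux huy hmem hgx hgy
  match_scalars
  all_goals field_simp
  any_goals ring
  · linear_combination (a₂ q * fderiv ℝ Pb q (0,1)) * hone q hq
  · linear_combination (-(a₁ q * fderiv ℝ Pb q (1,0))) * hone q hq
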